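/- Let X and Y be Banach spaces. Then NA_π(X⊗̂_πY) is norm-dense in X⊗̂_πY if and only if INA_π(X⊗̂_πY) is norm-dense in X⊗̂_πY. -/

import Mathlib

open MeasureTheory Metric Set Filter TopologicalSpace

noncomputable section

variable {𝕜 : Type*} [RCLike 𝕜]
variable {X : Type*} [NormedAddCommGroup X] [NormedSpace 𝕜 X]
variable {Y : Type*} [NormedAddCommGroup Y] [NormedSpace 𝕜 Y]
variable {T : Type*} [NormedAddCommGroup T] [NormedSpace 𝕜 T]
variable [NormedSpace ℝ T] [IsScalarTower ℝ 𝕜 T]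

/-- `T`, together with the continuous bilinear map `tmul`, is a realization of the
projective tensor product `X ⊗̂_π Y`: it is complete, the span of elementary tensors
`x ⊗ y = tmul x y` is dense, and on that span the norm is the projective norm. -/
structure IsProjTensor (tmul : X →L[𝕜] Y →L[𝕜] T) : Prop where
  complete : CompleteSpace T
  dense_span :
    Dense ((Submodule.span 𝕜 (Set.range fun p : X × Y => tmul p.1 p.2) : Submodule 𝕜 T) : Set T)
  norm_eq : ∀ z : T,
    z ∈ Submodule.span 𝕜 (Set.range fun p : X × Y => tmul p.1 p.2) →
    ‖z‖ = sInf { c : ℝ | ∃ (m : ℕ) (x : Fin m → X) (y : Fin m → Y),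
      z = ∑ i, tmul (x i) (y i) ∧ c = ∑ i, ‖x i‖ * ‖y i‖ }

/-- `u` attains its projective norm (`u ∈ NA_π(X ⊗̂_π Y)`): it admits a representation
`u = ∑ λ_n x_n ⊗ y_n` with `x_n ∈ B_X`, `y_n ∈ B_Y`, `λ_n ≥ 0` and `∑ λ_n = ‖u‖_π`. -/
def NApi (tmul : X →L[𝕜] Y →L[𝕜] T) (u : T) : Prop :=
  ∃ (x : ℕ → X) (y : ℕ → Y) (l : ℕ → ℝ),
    (∀ n, ‖x n‖ ≤ 1) ∧ (∀ n, ‖y n‖ ≤ 1) ∧ (∀ n, 0 ≤ l n) ∧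
    HasSum (fun n => (l n : 𝕜) • tmul (x n) (y n)) u ∧ HasSum l ‖u‖

/-- `u` is finitely norm-attaining (`u ∈ FNA_π(X ⊗̂_π Y)`): it admits a finite optimal
representation `u = ∑_{k<m} x_k ⊗ y_k` with `∑_{k<m} ‖x_k‖‖y_k‖ = ‖u‖_π`. -/
def FNApi (tmul : X →L[𝕜] Y →L[𝕜] T) (u : T) : Prop :=
  ∃ (m : ℕ) (x : Fin m → X) (y : Fin m → Y),
    u = ∑ i, tmul (x i) (y i) ∧ ∑ i, ‖x i‖ * ‖y i‖ = ‖u‖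

/-- `u` is an integral projective norm-attaining tensor witnessed by `μ`: `μ` is a finite
positive Borel measure concentrated on `B_X × B_Y`, the map `(x, y) ↦ x ⊗ y` is
`μ`-Bochner integrable, `u = ∫ x ⊗ y ∂μ` and `‖μ‖ = ‖u‖_π`. -/
def INApiWitness [MeasurableSpace X] [MeasurableSpace Y]
    (tmul : X →L[𝕜] Y →L[𝕜] T) (u : T) (μ : Measure (X × Y)) : Prop :=
  IsFiniteMeasure μ ∧
  μ ((closedBall (0 : X) 1 ×ˢ closedBall (0 : Y) 1)ᶜ) = 0 ∧
  Integrable (fun p : X × Y => tmul p.1 p.2) μ ∧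
  u = ∫ p, tmul p.1 p.2 ∂μ ∧
  (μ Set.univ).toReal = ‖u‖

/-- `u ∈ INA_π(X ⊗̂_π Y)`: `u` is an integral projective norm-attaining tensor. -/
def INApi [MeasurableSpace X] [MeasurableSpace Y]
    (tmul : X →L[𝕜] Y →L[𝕜] T) (u : T) : Prop :=
  ∃ μ : Measure (X × Y), INApiWitness tmul u μ

/-! A series representation `u = ∑ λₙ xₙ ⊗ yₙ` with `∑ λₙ = ‖u‖` is the integral of `x ⊗ y`
against the discrete measure `∑ λₙ δ_(xₙ, yₙ)`, so `NA_π ⊆ INA_π`. Conversely, let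
`u = ∫ x ⊗ y dμ` with `‖μ‖ = ‖u‖` and let `G` be a norming functional of `u`. Since
`G (x ⊗ y) ≤ 1` on `B_X × B_Y` and the integral of `G (x ⊗ y)` is `‖μ‖`, we get `G (x ⊗ y) = 1`
for `μ`-almost every `(x, y)`. Hence `u / ‖u‖`, the `μ`-average of `x ⊗ y`, lies in the closed
convex hull of the elementary tensors of `B_X × B_Y` on the face `G = 1`. A convex combination of
such tensors has norm `1`, so its finite representation is optimal, and `INA_π ⊆ closure NA_π`. -/

open scoped ENNReal

theorem Function.extend_zero_apply_mem {α β M : Type*} [Zero M] {e : α → β} {f : α → M}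
    {s : Set M} (h0 : 0 ∈ s) (hf : ∀ a, f a ∈ s) (b : β) : Function.extend e f 0 b ∈ s := by
  classical
  by_cases h : ∃ a, e a = b
  · rw [Function.extend_def, dif_pos h]
    exact hf _
  · rw [Function.extend_apply' _ _ _ h]
    exact h0

theorem apply_le_norm_of_norm_le_one {E : Type*} [NormedAddCommGroup E] [NormedSpace ℝ E]
    {G : StrongDual ℝ E} (hG : ‖G‖ ≤ 1) (t : E) : G t ≤ ‖t‖ :=
  (Real.le_norm_self _).trans ((G.le_of_opNorm_le hG t).trans_eq (one_mul _))

theorem norm_eq_one_of_mem_convexHull {E : Type*} [NormedAddCommGroup E] [NormedSpace ℝ E]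
    {G : StrongDual ℝ E} (hG : ‖G‖ ≤ 1) {s : Set E} (hs : ∀ t ∈ s, ‖t‖ ≤ 1 ∧ G t = 1)
    {c : E} (hc : c ∈ convexHull ℝ s) : ‖c‖ = 1 := by
  have hball : convexHull ℝ s ⊆ closedBall 0 1 :=
    convexHull_min (fun t ht => mem_closedBall_zero_iff.mpr (hs t ht).1) (convex_closedBall 0 1)
  have hface : convexHull ℝ s ⊆ G ⁻¹' {1} :=
    convexHull_min (fun t ht => (hs t ht).2) ((convex_singleton 1).linear_preimage G.toLinearMap)
  refine le_antisymm (mem_closedBall_zero_iff.mp (hball hc)) ?_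
  calc (1 : ℝ) = G c := (hface hc).symm
    _ ≤ ‖c‖ := apply_le_norm_of_norm_le_one hG c

section

omit [NormedSpace ℝ T] [IsScalarTower ℝ 𝕜 T]

theorem IsProjTensor.norm_tmul_le {tmul : X →L[𝕜] Y →L[𝕜] T} (hT : IsProjTensor tmul)
    (x : X) (y : Y) : ‖tmul x y‖ ≤ ‖x‖ * ‖y‖ := by
  rw [hT.norm_eq _ (Submodule.subset_span ⟨(x, y), rfl⟩)]
  refine csInf_le ⟨0, ?_⟩ ⟨1, ![x], ![y], by simp, by simp⟩
  rintro c ⟨m, xs, ys, -, rfl⟩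
  positivity

theorem NApi.of_hasSum (tmul : X →L[𝕜] Y →L[𝕜] T) {ι : Type*} [Countable ι] {u : T}
    (x : ι → X) (y : ι → Y) (l : ι → ℝ) (hx : ∀ i, ‖x i‖ ≤ 1) (hy : ∀ i, ‖y i‖ ≤ 1)
    (hl : ∀ i, 0 ≤ l i) (hu : HasSum (fun i => (l i : 𝕜) • tmul (x i) (y i)) u)
    (hlu : HasSum l ‖u‖) : NApi tmul u := by
  obtain ⟨e, he⟩ := Countable.exists_injective_nat ι
  refine ⟨Function.extend e x 0, Function.extend e y 0, Function.extend e l 0,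
    Function.extend_zero_apply_mem (s := {x | ‖x‖ ≤ 1}) (by simp) hx,
    Function.extend_zero_apply_mem (s := {y | ‖y‖ ≤ 1}) (by simp) hy,
    Function.extend_zero_apply_mem (s := {r : ℝ | 0 ≤ r}) (by simp) hl, ?_,
    (hasSum_extend_zero he).mpr hlu⟩
  rw [← hasSum_extend_zero he] at hu
  convert hu using 1
  funext n
  by_cases h : ∃ i, e i = n
  · obtain ⟨i, rfl⟩ := h
    simp [he.extend_apply]
  · simp [Function.extend_apply' _ _ _ h]

theorem NApi.zero (tmul : X →L[𝕜] Y →L[𝕜] T) : NApi tmul 0 :=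
  NApi.of_hasSum tmul (ι := Empty) isEmptyElim isEmptyElim isEmptyElim isEmptyElim isEmptyElim
    isEmptyElim (by simp) (by simp)

end

section

omit [IsScalarTower ℝ 𝕜 T]

theorem INApi.of_NApi [MeasurableSpace X] [BorelSpace X] [MeasurableSpace Y] [BorelSpace Y]
    {tmul : X →L[𝕜] Y →L[𝕜] T} (hT : IsProjTensor tmul) {u : T} (hu : NApi tmul u) :
    INApi tmul u := by
  have := hT.complete
  obtain ⟨x, y, l, hx, hy, hl, hsum, hlu⟩ := hu
  set φ : X × Y → T := fun p => tmul p.1 p.2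
  set p : ℕ → X × Y := fun n => (x n, y n)
  set c : ℕ → ℝ≥0∞ := fun n => ENNReal.ofReal (l n)
  set μ : Measure (X × Y) := Measure.sum fun n => c n • Measure.dirac (p n)
  have hμ_univ : μ univ = ENNReal.ofReal ‖u‖ := by
    rw [← hlu.tsum_eq, ENNReal.ofReal_tsum_of_nonneg hl hlu.summable]
    simp [μ, c]
  have hc : ∀ n, c n ≠ ∞ := fun _ => ENNReal.ofReal_ne_top
  have hsummable : Summable fun n => (c n).toReal * ‖φ (p n)‖ := by
    refine hlu.summable.of_nonneg_of_le (fun n => by positivity) fun n => ?_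
    rw [ENNReal.toReal_ofReal (hl n)]
    exact mul_le_of_le_one_right (hl n)
      ((hT.norm_tmul_le _ _).trans (mul_le_one₀ (hx n) (norm_nonneg _) (hy n)))
  refine ⟨μ, ⟨hμ_univ ▸ ENNReal.ofReal_lt_top⟩, ?_,
    integrable_sum_dirac hc hsummable, ?_, ?_⟩
  · refine Measure.sum_apply_eq_zero.mpr fun n => ?_
    simp [Measure.dirac_apply, p, hx n, hy n]
  · refine hsum.unique ?_
    convert hasSum_integral_sum_dirac hc hsummable using 2 with n
    rw [ENNReal.toReal_ofReal (hl n), RCLike.real_smul_eq_coe_smul (K := 𝕜)]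
  · rw [hμ_univ, ENNReal.toReal_ofReal (norm_nonneg _)]

def normingTensors (tmul : X →L[𝕜] Y →L[𝕜] T) (G : StrongDual ℝ T) : Set T :=
  {t | (∃ x y, ‖x‖ ≤ 1 ∧ ‖y‖ ≤ 1 ∧ tmul x y = t) ∧ G t = 1}

theorem NApi.smul_of_mem_convexHull {tmul : X →L[𝕜] Y →L[𝕜] T} (hT : IsProjTensor tmul)
    {G : StrongDual ℝ T} (hG : ‖G‖ ≤ 1) {c : T} (hc : c ∈ convexHull ℝ (normingTensors tmul G))
    {r : ℝ} (hr : 0 ≤ r) : NApi tmul (r • c) := by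
  have hnorm : ‖c‖ = 1 := by
    refine norm_eq_one_of_mem_convexHull hG ?_ hc
    rintro _ ⟨⟨x, y, hx, hy, rfl⟩, hGt⟩
    exact ⟨(hT.norm_tmul_le x y).trans (mul_le_one₀ hx (norm_nonneg _) hy), hGt⟩
  obtain ⟨ι, _, w, t, hw₀, hw₁, ht, rfl⟩ := mem_convexHull_iff_exists_fintype.mp hc
  choose x y hx hy htxy using fun i => (ht i).1
  refine NApi.of_hasSum tmul x y (fun i => r * w i) hx hy (fun i => mul_nonneg hr (hw₀ i)) ?_ ?_
  · convert hasSum_fintype fun i => ((r * w i : ℝ) : 𝕜) • tmul (x i) (y i) using 1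
    simp only [Finset.smul_sum, ← RCLike.real_smul_eq_coe_smul, mul_smul, htxy]
  · convert hasSum_fintype fun i => r * w i using 1
    rw [norm_smul, hnorm, Real.norm_of_nonneg hr, ← Finset.mul_sum, hw₁]

theorem INApiWitness.ae_mem_normingTensors [MeasurableSpace X] [MeasurableSpace Y]
    {tmul : X →L[𝕜] Y →L[𝕜] T} {u : T} {μ : Measure (X × Y)} (hμ : INApiWitness tmul u μ)
    (hT : IsProjTensor tmul) {G : StrongDual ℝ T} (hG : ‖G‖ ≤ 1) (hGu : G u = ‖u‖) :
    ∀ᵐ p ∂μ, tmul p.1 p.2 ∈ normingTensors tmul G := by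
  have := hT.complete
  obtain ⟨hfin, hK, hint, hu, hmass⟩ := hμ
  have hball : ∀ᵐ p ∂μ, ‖p.1‖ ≤ 1 ∧ ‖p.2‖ ≤ 1 :=
    mem_of_superset (mem_ae_iff.mpr hK) fun p hp =>
      ⟨mem_closedBall_zero_iff.mp hp.1, mem_closedBall_zero_iff.mp hp.2⟩
  have hle : ∀ᵐ p ∂μ, G (tmul p.1 p.2) ≤ 1 := hball.mono fun p hp =>
    (apply_le_norm_of_norm_le_one hG _).trans
      ((hT.norm_tmul_le _ _).trans (mul_le_one₀ hp.1 (norm_nonneg _) hp.2))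
  have hGint : ∫ p, G (tmul p.1 p.2) ∂μ = ∫ _, (1 : ℝ) ∂μ := by
    rw [G.integral_comp_comm hint, ← hu, hGu, integral_const, smul_eq_mul, mul_one,
      measureReal_def, hmass]
  have hG_one := (integral_eq_iff_of_ae_le (G.integrable_comp hint) (integrable_const 1) hle).mp
    hGint
  filter_upwards [hball, hG_one] with p hp hGp
  exact ⟨⟨p.1, p.2, hp.1, hp.2, rfl⟩, hGp⟩

theorem INApi.mem_closure_setOf_NApi [MeasurableSpace X] [MeasurableSpace Y]
    {tmul : X →L[𝕜] Y →L[𝕜] T} (hT : IsProjTensor tmul) {u : T} (hu : INApi tmul u) :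
    u ∈ closure {v | NApi tmul v} := by
  have := hT.complete
  obtain ⟨μ, hμ⟩ := hu
  obtain ⟨G, hG, hGu⟩ := exists_dual_vector'' ℝ u
  have hface := hμ.ae_mem_normingTensors hT hG hGu
  obtain ⟨hfin, -, hint, hu_int, hmass⟩ := hμ
  rcases eq_or_ne μ 0 with rfl | hμ0
  · rw [hu_int, integral_zero_measure]
    exact subset_closure (NApi.zero tmul)
  have : NeZero μ := ⟨hμ0⟩
  have havg : ⨍ p, tmul p.1 p.2 ∂μ ∈ closure (convexHull ℝ (normingTensors tmul G)) :=
    (convex_convexHull ℝ _).closure.average_mem isClosed_closure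
      (hface.mono fun _ hp => subset_closure (subset_convexHull ℝ _ hp)) hint
  have hu_eq : u = ‖u‖ • ⨍ p, tmul p.1 p.2 ∂μ := by
    rw [← hmass, ← measureReal_def, measure_smul_average, ← hu_int]
  rw [hu_eq]
  refine closure_mono ?_ (image_closure_subset_closure_image (continuous_const_smul ‖u‖)
    ⟨_, havg, rfl⟩)
  rintro _ ⟨c, hc, rfl⟩
  exact NApi.smul_of_mem_convexHull hT hG hc (norm_nonneg u)

end

theorem stmt_7_general
    [MeasurableSpace X] [BorelSpace X] [MeasurableSpace Y] [BorelSpace Y]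
    (tmul : X →L[𝕜] Y →L[𝕜] T) (hT : IsProjTensor tmul) :
    Dense {u : T | NApi tmul u} ↔ Dense {u : T | INApi tmul u} :=
  ⟨fun h => h.mono fun _ hu => INApi.of_NApi hT hu,
    fun h => dense_closure.mp (h.mono fun _ hu => INApi.mem_closure_setOf_NApi hT hu)⟩

/-- Corollary 2.11: density of `NA_π` is equivalent to density of `INA_π`. -/
theorem stmt_7 [CompleteSpace X] [CompleteSpace Y]
    [MeasurableSpace X] [BorelSpace X] [MeasurableSpace Y] [BorelSpace Y]
    (tmul : X →L[𝕜] Y →L[𝕜] T) (hT : IsProjTensor tmul) :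
    Dense {u : T | NApi tmul u} ↔ Dense {u : T | INApi tmul u} :=
  stmt_7_general tmul hT
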